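/- arXiv:1210.7156 — 4 statements merged into one kernel-verified Lean document; each statement's English description precedes it below -/
import Mathlib

section
/- Consider a Markov chain on assignments x : V → D where, at each step, every unsatisfied vertex independently picks each color with probability at least γ > 0 and every satisfied vertex keeps its color with probability 1 (a vertex i is unsatisfied iff some (j,i) ∈ C has x_j = x_i). If at time 0 the vertices of a directed cycle p_1 → p_2 → ... → p_m → p_{m+1} → p_1 in C (m > 1) satisfy x_{p_{m+1}}(0) = x_{p_1}(0), then with probability at least γ^{Nm} (N = |V|), after m steps the colors along (p_1,...,p_m) are the 1-rotation of their initial values and all other vertices retain their initial colors. -/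
open MeasureTheory

/-- A vertex `i` is unsatisfied under assignment `x` (w.r.t. sensing edges `C`)
iff some sensed in-neighbor shares its color. -/
def CFLUnsat {V D : Type*} (C : Set (V × V)) (x : V → D) (i : V) : Prop :=
  ∃ j, (j, i) ∈ C ∧ x j = x i

/-- Lemma `perm`: Under CFL dynamics (satisfied vertices frozen,
each unsatisfied vertex picking every color with probability at least `γ` at each
step, independently), if at time 0 the endpoints of a directed cycle
`p 0 → ⋯ → p m → p 0` (vertices `p 0, …, p m` distinct, `m > 1`, with
`x0 (p m) = x0 (p 0)`) then with probability at least `γ^(N·m)` after `m` steps the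
colors along `(p 0, …, p (m-1))` have undergone a 1-rotation while all other
vertices retain their initial colors. -/
theorem one_rotation_event_prob {V D : Type*} [Fintype V] [Fintype D]
    (C : Set (V × V)) {Ω : Type*} [MeasurableSpace Ω]
    (μ : Measure Ω) [IsProbabilityMeasure μ]
    (X : ℕ → Ω → V → D) (γ : ℝ) (hγ : γ ∈ Set.Ioc (0 : ℝ) 1)
    (hstep : ∀ (t : ℕ) (h : ℕ → V → D),
      (∀ i : V, ¬ CFLUnsat C (h t) i → h (t + 1) i = h t i) →
      γ ^ (Nat.card {i : V // CFLUnsat C (h t) i}) * (μ {ω | ∀ s ≤ t, X s ω = h s}).toReal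
        ≤ (μ {ω | ∀ s ≤ t + 1, X s ω = h s}).toReal)
    (m : ℕ) (hm : 1 < m) (p : ℕ → V)
    (hpinj : ∀ s < m, ∀ t < m, p s = p t → s = t)
    (hcycle : ∀ i < m, (p i, p (i + 1)) ∈ C) (hclose : (p m, p 0) ∈ C)
    (x0 : V → D) (hrep : x0 (p m) = x0 (p 0))
    (y : V → D)
    (hyrot : ∀ t < m, y (p t) = x0 (p ((t + 1) % m)))
    (hyfix : ∀ i : V, (∀ t < m, p t ≠ i) → y i = x0 i) :
    γ ^ (Fintype.card V * m) * (μ {ω | X 0 ω = x0}).toReal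
      ≤ (μ ({ω | X m ω = y} ∩ {ω | X 0 ω = x0})).toReal := by
  classical
  obtain ⟨hγ0, hγ1⟩ := hγ
  set N := Fintype.card V with hN
  -- the deterministic trajectory: at time t, vertices p 0, …, p (t-1) have rotated
  set h : ℕ → V → D := fun t i =>
    if ∃ s, s < t ∧ s < m ∧ p s = i then y i else x0 i with hh
  have hh0 : h 0 = x0 := by
    funext i; simp [hh]
  have hhm : h m = y := by
    funext i
    by_cases hc : ∃ s, s < m ∧ s < m ∧ p s = i
    · simp only [hh]; rw [if_pos hc]
    · simp only [hh]; rw [if_neg hc]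
      push_neg at hc
      exact (hyfix i (fun t ht hti => (hc t ht ht hti))).symm
  -- the vertex p t is unsatisfied at time t
  have hunsat : ∀ t, t < m → CFLUnsat C (h t) (p t) := by
    intro t ht
    have hpt : h t (p t) = x0 (p t) := by
      simp only [hh]; rw [if_neg]
      rintro ⟨s, hst, hsm, hsp⟩
      exact absurd (hpinj s hsm t ht hsp) (Nat.ne_of_lt hst)
    rcases Nat.eq_zero_or_pos t with h0 | hpos
    · subst h0
      refine ⟨p m, hclose, ?_⟩
      rw [hh0]; exact hrep
    · refine ⟨p (t - 1), ?_, ?_⟩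
      · have := hcycle (t - 1) (lt_of_le_of_lt (Nat.sub_le t 1) ht)
        rwa [Nat.sub_add_cancel hpos] at this
      · have hprev : h t (p (t - 1)) = y (p (t - 1)) := by
          simp only [hh]; rw [if_pos]
          exact ⟨t - 1, Nat.sub_lt hpos one_pos,
            lt_of_le_of_lt (Nat.sub_le t 1) ht, rfl⟩
        rw [hprev, hpt]
        have := hyrot (t - 1) (lt_of_le_of_lt (Nat.sub_le t 1) ht)
        rw [this, Nat.sub_add_cancel hpos, Nat.mod_eq_of_lt ht]
  -- satisfied vertices are frozen along h
  have hfrozen : ∀ t, ∀ i, ¬ CFLUnsat C (h t) i → h (t + 1) i = h t i := by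
    intro t i hns
    by_contra hne
    have hcond : ∃ s, s < t + 1 ∧ s < m ∧ p s = i := by
      by_contra hc
      simp only [hh] at hne
      rw [if_neg hc, if_neg (fun ⟨s, hst, hsm, hsp⟩ =>
        hc ⟨s, Nat.lt_succ_of_lt hst, hsm, hsp⟩)] at hne
      exact hne rfl
    have hncond : ¬ ∃ s, s < t ∧ s < m ∧ p s = i := by
      intro hc
      simp only [hh] at hne
      rw [if_pos hcond, if_pos hc] at hne
      exact hne rfl
    obtain ⟨s, hst1, hsm, hsp⟩ := hcond
    have hst : s = t := by
      rcases Nat.lt_succ_iff_lt_or_eq.mp hst1 with h' | h'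
      · exact absurd ⟨s, h', hsm, hsp⟩ hncond
      · exact h'
    subst hst
    exact hns (hsp ▸ hunsat s hsm)
  -- bound on the number of unsatisfied vertices
  have hcnt : ∀ z : V → D, Nat.card {i : V // CFLUnsat C z i} ≤ N := by
    intro z
    calc Nat.card {i : V // CFLUnsat C z i} ≤ Nat.card V :=
          Nat.card_le_card_of_injective _ Subtype.val_injective
      _ = N := Nat.card_eq_fintype_card
  have hμ0 : (0 : ℝ) ≤ (μ {ω | X 0 ω = x0}).toReal := ENNReal.toReal_nonneg
  -- main induction
  have main : ∀ t, t ≤ m →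
      γ ^ (N * t) * (μ {ω | X 0 ω = x0}).toReal
        ≤ (μ {ω | ∀ s ≤ t, X s ω = h s}).toReal := by
    intro t
    induction t with
    | zero =>
      intro _
      have hset : {ω | ∀ s ≤ 0, X s ω = h s} = {ω | X 0 ω = x0} := by
        ext ω
        simp only [Set.mem_setOf_eq, Nat.le_zero]
        constructor
        · intro hω; rw [hω 0 rfl, hh0]
        · intro hω s hs; subst hs; rw [hω, hh0]
      rw [hset, Nat.mul_zero, pow_zero, one_mul]
    | succ t ih =>
      intro ht1
      have htm : t < m := ht1
      have ih' := ih (le_of_lt htm)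
      have step := hstep t h (hfrozen t)
      have hγN : γ ^ N ≤ γ ^ (Nat.card {i : V // CFLUnsat C (h t) i}) :=
        pow_le_pow_of_le_one hγ0.le hγ1 (hcnt (h t))
      calc γ ^ (N * (t + 1)) * (μ {ω | X 0 ω = x0}).toReal
          = γ ^ N * (γ ^ (N * t) * (μ {ω | X 0 ω = x0}).toReal) := by
            rw [Nat.mul_succ, pow_add, mul_assoc]; ring
        _ ≤ γ ^ (Nat.card {i : V // CFLUnsat C (h t) i}) *
              (γ ^ (N * t) * (μ {ω | X 0 ω = x0}).toReal) := by
            apply mul_le_mul_of_nonneg_right hγN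
            exact mul_nonneg (pow_nonneg hγ0.le _) hμ0
        _ ≤ γ ^ (Nat.card {i : V // CFLUnsat C (h t) i}) *
              (μ {ω | ∀ s ≤ t, X s ω = h s}).toReal :=
            mul_le_mul_of_nonneg_left ih' (pow_nonneg hγ0.le _)
        _ ≤ (μ {ω | ∀ s ≤ t + 1, X s ω = h s}).toReal := step
  have hsub : {ω | ∀ s ≤ m, X s ω = h s} ⊆ {ω | X m ω = y} ∩ {ω | X 0 ω = x0} := by
    intro ω hω
    constructor
    · show X m ω = y; rw [hω m le_rfl, hhm]
    · show X 0 ω = x0; rw [hω 0 (Nat.zero_le m), hh0]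
  calc γ ^ (N * m) * (μ {ω | X 0 ω = x0}).toReal
      ≤ (μ {ω | ∀ s ≤ m, X s ω = h s}).toReal := main m le_rfl
    _ ≤ (μ ({ω | X m ω = y} ∩ {ω | X 0 ω = x0})).toReal :=
        ENNReal.toReal_mono (measure_ne_top μ _) (measure_mono hsub)
end

section
/- Under the same Markov dynamics (unsatisfied vertices pick each color with probability ≥ γ, satisfied vertices frozen), suppose the assignment x(0) is not C-satisfying and the directed graph (V,C) is strongly connected with N = |V|. Let k be an unsatisfied vertex and j a vertex with (j,k) ∈ C and x_j(0) = x_k(0), and let d be any color. Then with probability at least γ^{N^3}, within at most N^2 steps the process reaches an assignment equal to x(0) except that vertex j has color d. -/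
open MeasureTheory

/-!
A vertex may only be recoloured while it is unsatisfied, so a single recolouring of `j`
cannot be made directly. Strong connectivity gives a simple path `k = c₀ → c₁ → ⋯ → cₘ = j`,
closed into a directed cycle by the edge `j → k`. The conflict between `cₘ` and `c₀` can be
pushed around this cycle: recolouring `c₀, c₁, …, cₘ` in turn, each by the colour of its
successor, makes every vertex unsatisfied when its turn comes, and one such wave rotates the
colours of `c₀, …, cₘ₋₁` by one place. After `m - 1` full waves and the first `m` moves of
the next one every `cₛ` with `s < m` carries its original colour again, and `cₘ = j` is
unsatisfied, so it may take the colour `d`. These are at most `N²` legal moves, each having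
conditional probability at least `γ^N`.
-/

namespace Relation.ReflTransGen

variable {α : Type*} {r : α → α → Prop}

theorem exists_injOn_path {a b : α} (h : ReflTransGen r a b) :
    ∃ (m : ℕ) (c : ℕ → α), c 0 = a ∧ c m = b ∧ (∀ s < m, r (c s) (c (s + 1))) ∧
      Set.InjOn c (Set.Iic m) := by
  induction h using head_induction_on with
  | refl => exact ⟨0, fun _ => b, rfl, rfl, by simp, fun s hs t ht _ => by simp_all⟩
  | @head a a' hr _ ih =>
    obtain ⟨m, c, hc0, hcm, hedge, hinj⟩ := ih
    by_cases hmem : ∃ i ≤ m, c i = a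
    · -- the loop back to `a` is cut off
      obtain ⟨i, hi, hca⟩ := hmem
      refine ⟨m - i, fun s => c (s + i), by simpa using hca,
        by simp only [Nat.sub_add_cancel hi, hcm], fun s hs => ?_, fun s hs t ht hst => ?_⟩
      · simpa [Nat.add_right_comm s 1 i] using hedge (s + i) (by omega)
      · have := hinj (Set.mem_Iic.2 (by simp at hs; omega)) (Set.mem_Iic.2 (by simp at ht; omega))
          hst
        omega
    · push Not at hmem
      refine ⟨m + 1, fun | 0 => a | s + 1 => c s, rfl, hcm, ?_, ?_⟩
      · rintro (_ | s) hs
        · simpa [hc0] using hr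
        · exact hedge s (by omega)
      · rintro (_ | s) hs (_ | t) ht hst
        · rfl
        · exact absurd hst.symm (hmem t (by simp at ht; omega))
        · exact absurd hst (hmem s (by simp at hs; omega))
        · simp only [Set.mem_Iic] at hs ht
          rw [hinj (Set.mem_Iic.2 (by omega)) (Set.mem_Iic.2 (by omega)) hst]

end Relation.ReflTransGen

theorem Set.InjOn.add_one_le_card_of_Iic {V : Type*} [Fintype V] {c : ℕ → V} {m : ℕ}
    (hinj : Set.InjOn c (Set.Iic m)) : m + 1 ≤ Fintype.card V := by
  rw [← Nat.card_Iic m]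
  exact Finset.card_le_card_of_injOn c (fun _ _ => Finset.mem_univ _) (by simpa using hinj)

section Moves

variable {V D : Type*} {C : Set (V × V)}

def CFLMove (C : Set (V × V)) (x y : V → D) : Prop :=
  ∀ i, ¬ CFLUnsat C x i → y i = x i

theorem CFLMove.of_eq_of_ne {x y : V → D} {v : V} (hv : CFLUnsat C x v)
    (hy : ∀ i ≠ v, y i = x i) : CFLMove C x y :=
  fun i hi => hy i fun h => hi (h ▸ hv)

inductive CFLPath (C : Set (V × V)) : ℕ → (V → D) → (V → D) → Prop
  | refl (x : V → D) : CFLPath C 0 x x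
  | tail {n : ℕ} {x y z : V → D} : CFLPath C n x y → CFLMove C y z → CFLPath C (n + 1) x z

namespace CFLPath

theorem trans {n n' : ℕ} {x y z : V → D} (h : CFLPath C n x y) (h' : CFLPath C n' y z) :
    CFLPath C (n + n') x z := by
  induction h' with
  | refl => exact h
  | tail _ hmove ih => exact (ih h).tail hmove

theorem exists_run {n : ℕ} {x y : V → D} (hxy : CFLPath C n x y) :
    ∃ h : ℕ → V → D, h 0 = x ∧ h n = y ∧ ∀ t < n, CFLMove C (h t) (h (t + 1)) := by
  induction hxy with
  | refl x => exact ⟨fun _ => x, rfl, rfl, by simp⟩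
  | @tail n x y z _ hmove ih =>
    obtain ⟨h, h0, hn, hrun⟩ := ih
    refine ⟨fun t => if t ≤ n then h t else z, by simpa using h0, by simp, fun t ht => ?_⟩
    rcases Nat.lt_succ_iff_lt_or_eq.1 ht with ht | rfl
    · simpa [ht.le, Nat.succ_le_of_lt ht] using hrun t ht
    · simpa [hn] using hmove

end CFLPath

end Moves

section Probability

variable {V D Ω : Type*} [Fintype V] [MeasurableSpace Ω] {C : Set (V × V)} {μ : Measure Ω}
  {X : ℕ → Ω → V → D} {γ : ℝ}

theorem pow_mul_measure_le_measure_history (hγ : γ ∈ Set.Ioc (0 : ℝ) 1)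
    (hstep : ∀ (t : ℕ) (h : ℕ → V → D),
      (∀ i : V, ¬ CFLUnsat C (h t) i → h (t + 1) i = h t i) →
      γ ^ (Nat.card {i : V // CFLUnsat C (h t) i}) * (μ {ω | ∀ s ≤ t, X s ω = h s}).toReal
        ≤ (μ {ω | ∀ s ≤ t + 1, X s ω = h s}).toReal)
    {h : ℕ → V → D} {T : ℕ} (hrun : ∀ t < T, CFLMove C (h t) (h (t + 1))) :
    γ ^ (Fintype.card V * T) * (μ {ω | X 0 ω = h 0}).toReal
      ≤ (μ {ω | ∀ s ≤ T, X s ω = h s}).toReal := by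
  have hγ0 : 0 ≤ γ := hγ.1.le
  induction T with
  | zero => simp
  | succ T ih =>
    have hunsat : Nat.card {i : V // CFLUnsat C (h T) i} ≤ Fintype.card V :=
      Nat.card_eq_fintype_card (α := V) ▸ Finite.card_subtype_le _
    calc γ ^ (Fintype.card V * (T + 1)) * (μ {ω | X 0 ω = h 0}).toReal
        = γ ^ Fintype.card V * (γ ^ (Fintype.card V * T) * (μ {ω | X 0 ω = h 0}).toReal) := by
          ring
      _ ≤ γ ^ Nat.card {i : V // CFLUnsat C (h T) i} * (μ {ω | ∀ s ≤ T, X s ω = h s}).toReal :=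
          mul_le_mul (pow_le_pow_of_le_one hγ0 hγ.2 hunsat) (ih fun t ht => hrun t (by omega))
            (by positivity) (by positivity)
      _ ≤ (μ {ω | ∀ s ≤ T + 1, X s ω = h s}).toReal := hstep T h (hrun T (by omega))

end Probability

section Cycle

variable {V D : Type*} {C : Set (V × V)} {x : V → D} {c : ℕ → V} {m : ℕ}

open Classical in
noncomputable def cycleRecolor (x : V → D) (c : ℕ → V) (m : ℕ) (f : ℕ → D) : V → D :=
  fun v => if h : ∃ s ≤ m, c s = v then f h.choose else x v

theorem cycleRecolor_apply_congr {f f' : ℕ → D} {v : V} (h : ∀ s ≤ m, c s = v → f s = f' s) :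
    cycleRecolor x c m f v = cycleRecolor x c m f' v := by
  unfold cycleRecolor
  split_ifs with hv
  · exact h _ hv.choose_spec.1 hv.choose_spec.2
  · rfl

theorem cycleRecolor_apply_eq_self {f : ℕ → D} {v : V} (h : ∀ s ≤ m, c s = v → f s = x v) :
    cycleRecolor x c m f v = x v := by
  unfold cycleRecolor
  split_ifs with hv
  · exact h _ hv.choose_spec.1 hv.choose_spec.2
  · rfl

theorem cycleRecolor_apply_of_le (hinj : Set.InjOn c (Set.Iic m)) (f : ℕ → D) {s : ℕ}
    (hs : s ≤ m) : cycleRecolor x c m f (c s) = f s := by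
  have hv : ∃ t ≤ m, c t = c s := ⟨s, hs, rfl⟩
  simp only [cycleRecolor, dif_pos hv]
  exact congrArg f (hinj (Set.mem_Iic.2 hv.choose_spec.1) (Set.mem_Iic.2 hs) hv.choose_spec.2)

/-- The state after the first `p` moves of a wave shifting the colours `g` one place back
along the cycle. -/
noncomputable def waveState (x : V → D) (c : ℕ → V) (m : ℕ) (g : ℕ → D) (p : ℕ) : V → D :=
  cycleRecolor x c m fun s => if s < p then g (s + 1) else g s

variable (hedge : ∀ s < m, (c s, c (s + 1)) ∈ C) (hback : (c m, c 0) ∈ C)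
  (hinj : Set.InjOn c (Set.Iic m))
include hedge hback hinj

theorem cflUnsat_waveState {g : ℕ → D} (hg : g m = g 0) {p : ℕ} (hp : p ≤ m) :
    CFLUnsat C (waveState x c m g p) (c p) := by
  unfold waveState
  cases p with
  | zero => exact ⟨c m, hback, by simpa [cycleRecolor_apply_of_le hinj] using hg⟩
  | succ p =>
    refine ⟨c p, hedge p hp, ?_⟩
    rw [cycleRecolor_apply_of_le hinj _ (by omega), cycleRecolor_apply_of_le hinj _ hp]
    simp

theorem cflPath_waveState {g : ℕ → D} (hg : g m = g 0) {p : ℕ} (hp : p ≤ m + 1) :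
    CFLPath C p (waveState x c m g 0) (waveState x c m g p) := by
  induction p with
  | zero => exact .refl _
  | succ p ih =>
    refine (ih (by omega)).tail (.of_eq_of_ne (cflUnsat_waveState hedge hback hinj hg
      (by omega)) fun i hi => cycleRecolor_apply_congr fun s _ hs => ?_)
    have : s ≠ p := fun h => hi (h ▸ hs.symm)
    simp only [Nat.lt_succ_iff_lt_or_eq, this, or_false]

theorem cflPath_rotate {b : ℕ → D} (hb : Function.Periodic b m) (q : ℕ) :
    CFLPath C (q * (m + 1)) (waveState x c m b 0) (waveState x c m (fun n => b (n + q)) 0) := by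
  induction q with
  | zero => simpa using CFLPath.refl (C := C) (waveState x c m b 0)
  | succ q ih =>
    have hwave := cflPath_waveState (x := x) hedge hback hinj (g := fun n => b (n + q))
      (by simpa [Nat.add_comm m q] using hb q) le_rfl
    have hshift : waveState x c m (fun n => b (n + q)) (m + 1)
        = waveState x c m (fun n => b (n + (q + 1))) 0 := by
      funext i
      exact cycleRecolor_apply_congr fun s hs _ => by simp [Nat.lt_succ_of_le hs, Nat.add_assoc,
        Nat.add_comm 1 q]
    rw [Nat.succ_mul]
    exact ih.trans (hshift ▸ hwave)

theorem cflPath_update_of_cycle [DecidableEq V] (hcyc : x (c m) = x (c 0)) (d : D) :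
    CFLPath C ((m - 1) * (m + 1) + m + 1) x (Function.update x (c m) d) := by
  set b : ℕ → D := fun n => x (c (n % m))
  have hb : Function.Periodic b m := fun n => by simp [b]
  have hstart : waveState x c m b 0 = x := by
    funext i
    refine cycleRecolor_apply_eq_self fun s hs hsi => ?_
    rcases hs.lt_or_eq with hs | rfl
    · simp [b, Nat.mod_eq_of_lt hs, hsi]
    · simp [b, ← hsi, hcyc]
  set g : ℕ → D := fun n => b (n + (m - 1))
  have hg : g m = g 0 := by simpa [g, Nat.add_comm m] using hb (m - 1)
  have hrotate := cflPath_rotate (x := x) hedge hback hinj hb (m - 1)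
  have hwave := cflPath_waveState (x := x) hedge hback hinj hg (p := m) (by omega)
  have hlast : CFLMove C (waveState x c m g m) (Function.update x (c m) d) := by
    refine .of_eq_of_ne (cflUnsat_waveState hedge hback hinj hg le_rfl) fun i hi => ?_
    rw [Function.update_of_ne hi]
    refine (cycleRecolor_apply_eq_self fun s hs hsi => ?_).symm
    have hsm : s < m := hs.lt_of_ne fun h => hi (h ▸ hsi.symm)
    simp [g, b, hsm, Nat.mod_eq_of_lt hsm, ← hsi, show s + 1 + (m - 1) = s + m by omega]
  exact (hstart ▸ hrotate.trans hwave).tail hlast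

end Cycle

theorem recolor_single_vertex_prob_general {V D : Type*} [Fintype V] [DecidableEq V]
    (C : Set (V × V)) {Ω : Type*} [MeasurableSpace Ω]
    (μ : Measure Ω) [IsProbabilityMeasure μ]
    (X : ℕ → Ω → V → D) (γ : ℝ) (hγ : γ ∈ Set.Ioc (0 : ℝ) 1)
    (hstep : ∀ (t : ℕ) (h : ℕ → V → D),
      (∀ i : V, ¬ CFLUnsat C (h t) i → h (t + 1) i = h t i) →
      γ ^ (Nat.card {i : V // CFLUnsat C (h t) i}) * (μ {ω | ∀ s ≤ t, X s ω = h s}).toReal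
        ≤ (μ {ω | ∀ s ≤ t + 1, X s ω = h s}).toReal)
    (hconn : ∀ u v : V, u ≠ v → Relation.ReflTransGen (fun p q => (p, q) ∈ C) u v)
    (x0 : V → D)
    (k j : V) (hjk : (j, k) ∈ C) (hcol : x0 j = x0 k)
    (d : D) :
    ∃ t ≤ (Fintype.card V) ^ 2,
      γ ^ ((Fintype.card V) ^ 3) * (μ {ω | X 0 ω = x0}).toReal
        ≤ (μ ({ω | X t ω = Function.update x0 j d} ∩ {ω | X 0 ω = x0})).toReal := by
  have hreach : Relation.ReflTransGen (fun p q => (p, q) ∈ C) k j :=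
    if hkj : k = j then hkj ▸ .refl else hconn k j hkj
  obtain ⟨m, c, hc0, hcm, hedge, hinj⟩ := hreach.exists_injOn_path
  subst hc0 hcm
  set N := Fintype.card V
  set T := (m - 1) * (m + 1) + m + 1
  have hTN : T ≤ N ^ 2 := by
    have hmN := hinj.add_one_le_card_of_Iic
    have : (m - 1) * (m + 1) ≤ m * (m + 1) := Nat.mul_le_mul_right _ (Nat.sub_le m 1)
    calc T ≤ (m + 1) * (m + 1) := by simp only [T]; linarith
      _ ≤ N ^ 2 := sq N ▸ Nat.mul_le_mul hmN hmN
  obtain ⟨h, h0, hT, hrun⟩ := (cflPath_update_of_cycle hedge hjk hinj hcol d).exists_run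
  refine ⟨T, hTN, ?_⟩
  calc γ ^ N ^ 3 * (μ {ω | X 0 ω = x0}).toReal
      ≤ γ ^ (N * T) * (μ {ω | X 0 ω = h 0}).toReal := by
        rw [h0]
        refine mul_le_mul_of_nonneg_right (pow_le_pow_of_le_one hγ.1.le hγ.2 ?_)
          ENNReal.toReal_nonneg
        calc N * T ≤ N * N ^ 2 := Nat.mul_le_mul_left N hTN
          _ = N ^ 3 := by ring
    _ ≤ (μ {ω | ∀ s ≤ T, X s ω = h s}).toReal := pow_mul_measure_le_measure_history hγ hstep hrun
    _ ≤ (μ ({ω | X T ω = Function.update x0 (c m) d} ∩ {ω | X 0 ω = x0})).toReal :=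
        ENNReal.toReal_mono (measure_ne_top μ _) (measure_mono fun ω hω =>
          ⟨hT ▸ hω T le_rfl, h0 ▸ hω 0 (Nat.zero_le T)⟩)

/-- Lemma 2: Under CFL dynamics on a strongly connected sensing graph,
if `x0` is not `C`-satisfying, `k` is unsatisfied, `(j,k) ∈ C` with `x0 j = x0 k`,
and `d` is any color, then with probability at least `γ^(N^3)`, within at most `N^2`
steps the chain reaches the assignment equal to `x0` except vertex `j` has color `d`. -/
theorem recolor_single_vertex_prob {V D : Type*} [Fintype V] [Fintype D] [DecidableEq V]
    (C : Set (V × V)) {Ω : Type*} [MeasurableSpace Ω]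
    (μ : Measure Ω) [IsProbabilityMeasure μ]
    (X : ℕ → Ω → V → D) (γ : ℝ) (hγ : γ ∈ Set.Ioc (0 : ℝ) 1)
    (hstep : ∀ (t : ℕ) (h : ℕ → V → D),
      (∀ i : V, ¬ CFLUnsat C (h t) i → h (t + 1) i = h t i) →
      γ ^ (Nat.card {i : V // CFLUnsat C (h t) i}) * (μ {ω | ∀ s ≤ t, X s ω = h s}).toReal
        ≤ (μ {ω | ∀ s ≤ t + 1, X s ω = h s}).toReal)
    (hconn : ∀ u v : V, u ≠ v → Relation.ReflTransGen (fun p q => (p, q) ∈ C) u v)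
    (x0 : V → D) (hx0 : ∃ i, CFLUnsat C x0 i)
    (k j : V) (hk : CFLUnsat C x0 k) (hjk : (j, k) ∈ C) (hcol : x0 j = x0 k)
    (d : D) :
    ∃ t ≤ (Fintype.card V) ^ 2,
      γ ^ ((Fintype.card V) ^ 3) * (μ {ω | X 0 ω = x0}).toReal
        ≤ (μ ({ω | X t ω = Function.update x0 j d} ∩ {ω | X 0 ω = x0})).toReal :=
  recolor_single_vertex_prob_general C μ X γ hγ hstep hconn x0 k j hjk hcol d
end

section
/- Under the Markov dynamics above, let a be a proper coloring target, F(t) = {i : x_i(t) = a_i}, U(t) the set of unsatisfied vertices. If the initial assignment has U(0) ⊄ F(0) (some unsatisfied vertex lacks its target color), then with probability at least γ^{Σ_{k=|F(0)|}^{|F(t̃)|} k} ≥ γ^{N(N+1)/2}, in at most t̃ ≤ N steps the process reaches a state with F(t̃) ⊋ F(0) and U(t̃) ⊆ F(t̃), by the event that at each step every unsatisfied vertex switches to its target color while all other vertices keep their colors. -/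
open MeasureTheory

open Classical in
/-- The deterministic "good event" trajectory: at each step every unsatisfied
vertex switches to its target color, everyone else keeps its color. -/
noncomputable def CFLseq {V D : Type*} (C : Set (V × V)) (a x0 : V → D) : ℕ → V → D
  | 0 => x0
  | (t+1) => fun i => if CFLUnsat C (CFLseq C a x0 t) i then a i else CFLseq C a x0 t i

section Aux

variable {V D : Type*} (C : Set (V × V)) (a x0 : V → D)

lemma CFLseq_unsat (t : ℕ) (i : V) (h : CFLUnsat C (CFLseq C a x0 t) i) :
    CFLseq C a x0 (t+1) i = a i := by
  simp [CFLseq, h]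

lemma CFLseq_sat (t : ℕ) (i : V) (h : ¬ CFLUnsat C (CFLseq C a x0 t) i) :
    CFLseq C a x0 (t+1) i = CFLseq C a x0 t i := by
  simp [CFLseq, h]

/-- The target set is monotone along the trajectory. -/
lemma CFLseq_mono (t : ℕ) :
    {i : V | CFLseq C a x0 t i = a i} ⊆ {i : V | CFLseq C a x0 (t+1) i = a i} := by
  intro i hi
  by_cases h : CFLUnsat C (CFLseq C a x0 t) i
  · simpa using CFLseq_unsat C a x0 t i h
  · simp only [Set.mem_setOf_eq] at hi ⊢
    rw [CFLseq_sat C a x0 t i h]; exact hi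

lemma CFLseq_mono' {s t : ℕ} (hst : s ≤ t) :
    {i : V | CFLseq C a x0 s i = a i} ⊆ {i : V | CFLseq C a x0 t i = a i} := by
  induction hst with
  | refl => exact subset_rfl
  | step _ ih => exact ih.trans (CFLseq_mono C a x0 _)

/-- Unsatisfied vertices at time `t` hold their target color at time `t+1`. -/
lemma CFLseq_unsat_sub (t : ℕ) :
    {i : V | CFLUnsat C (CFLseq C a x0 t) i} ⊆ {i : V | CFLseq C a x0 (t+1) i = a i} := by
  intro i hi
  exact CFLseq_unsat C a x0 t i hi

end Aux

/-- Lemma 1: Under CFL dynamics, if some unsatisfied vertex lacks its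
target color (`U(0) ⊄ F(0)`), then with probability at least `γ^(N(N+1)/2)`, within
at most `N` steps the chain reaches an assignment `y` with `F(x0) ⊊ F(y)` and
`U(y) ⊆ F(y)`. -/
theorem grow_target_set_prob {V D : Type*} [Fintype V] [Fintype D]
    (C : Set (V × V)) {Ω : Type*} [MeasurableSpace Ω]
    (μ : Measure Ω) [IsProbabilityMeasure μ]
    (X : ℕ → Ω → V → D) (γ : ℝ) (hγ : γ ∈ Set.Ioc (0 : ℝ) 1)
    (hstep : ∀ (t : ℕ) (h : ℕ → V → D),
      (∀ i : V, ¬ CFLUnsat C (h t) i → h (t + 1) i = h t i) →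
      γ ^ (Nat.card {i : V // CFLUnsat C (h t) i}) * (μ {ω | ∀ s ≤ t, X s ω = h s}).toReal
        ≤ (μ {ω | ∀ s ≤ t + 1, X s ω = h s}).toReal)
    (a : V → D) (x0 : V → D)
    (hUF : ¬ {i : V | CFLUnsat C x0 i} ⊆ {i : V | x0 i = a i}) :
    ∃ t ≤ Fintype.card V, ∃ y : V → D,
      {i : V | x0 i = a i} ⊂ {i : V | y i = a i} ∧
      {i : V | CFLUnsat C y i} ⊆ {i : V | y i = a i} ∧
      γ ^ (Fintype.card V * (Fintype.card V + 1) / 2) * (μ {ω | X 0 ω = x0}).toReal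
        ≤ (μ ({ω | X t ω = y} ∩ {ω | X 0 ω = x0})).toReal := by
  classical
  set N := Fintype.card V with hN
  set h : ℕ → V → D := CFLseq C a x0 with hh
  have h0 : h 0 = x0 := rfl
  -- cardinalities
  set Fn : ℕ → ℕ := fun t => ({i : V | h t i = a i}).ncard with hFn
  set u : ℕ → ℕ := fun t => ({i : V | CFLUnsat C (h t) i}).ncard with hu
  have hFnN : ∀ t, Fn t ≤ N := fun t => le_trans
    (Set.ncard_le_ncard (Set.subset_univ _) (Set.toFinite _)) (by simp [Set.ncard_univ, Nat.card_eq_fintype_card, hN])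
  have hFnmono : ∀ {s t : ℕ}, s ≤ t → Fn s ≤ Fn t := fun {s t} hst =>
    Set.ncard_le_ncard (CFLseq_mono' C a x0 hst) (Set.toFinite _)
  -- if the unsat set is not inside the target set, the target set grows strictly
  have hgrow : ∀ t, ¬ ({i : V | CFLUnsat C (h t) i} ⊆ {i : V | h t i = a i}) →
      Fn t < Fn (t+1) := by
    intro t ht
    apply Set.ncard_lt_ncard _ (Set.toFinite _)
    constructor
    · exact CFLseq_mono C a x0 t
    · intro hsub
      rw [Set.not_subset] at ht
      obtain ⟨i, hiU, hiF⟩ := ht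
      have h1 : h (t+1) i = a i := CFLseq_unsat C a x0 t i hiU
      exact hiF (hsub h1)
  -- existence of a time ≤ N where all unsat vertices hold target colors
  set P : ℕ → Prop := fun t => {i : V | CFLUnsat C (h t) i} ⊆ {i : V | h t i = a i} with hP
  have hlb : ∀ t, (∀ s < t, ¬ P s) → t ≤ Fn t := by
    intro t
    induction t with
    | zero => intro _; exact Nat.zero_le _
    | succ t ih =>
      intro hall
      have h1 : t ≤ Fn t := ih fun s hs => hall s (Nat.lt_succ_of_lt hs)
      have h2 : Fn t < Fn (t+1) := hgrow t (hall t (Nat.lt_succ_self t))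
      omega
  have hex : ∃ t, P t := by
    by_contra hc
    push_neg at hc
    have := hlb (N+1) (fun s _ => hc s)
    have := hFnN (N+1)
    omega
  set m := Nat.find hex with hm
  have hPm : P m := Nat.find_spec hex
  have hmin : ∀ s < m, ¬ P s := fun s hs => Nat.find_min hex hs
  have hP0 : ¬ P 0 := by simpa [hP, h0] using hUF
  have hm1 : 1 ≤ m := by
    rcases Nat.eq_zero_or_pos m with h' | h'
    · exact absurd (h' ▸ hPm) hP0
    · exact h'
  have hmN : m ≤ N := by
    by_contra hc
    push_neg at hc
    have := hlb m (fun s hs => hmin s hs)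
    have h2 : Fn m ≤ N := hFnN m
    omega
  -- exponent bound : ∑_{s<m} u s ≤ N(N+1)/2
  have husub : ∀ t, u t ≤ Fn (t+1) :=
    fun t => Set.ncard_le_ncard (CFLseq_unsat_sub C a x0 t) (Set.toFinite _)
  set g : ℕ → ℕ := fun s => Fn (s+1) with hg
  have hginj : Set.InjOn g (Finset.range m) := by
    have hsm : ∀ {s t : ℕ}, s < t → t < m → g s < g t := by
      intro s t hst htm
      calc g s = Fn (s+1) := rfl
        _ ≤ Fn t := hFnmono hst
        _ < Fn (t+1) := hgrow t (hmin t htm)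
    intro s hs t ht hst
    simp only [Finset.coe_range, Set.mem_Iio] at hs ht
    rcases lt_trichotomy s t with h' | h' | h'
    · exact absurd hst (Nat.ne_of_lt (hsm h' ht))
    · exact h'
    · exact absurd hst.symm (Nat.ne_of_lt (hsm h' hs))
  have hsum : ∑ s ∈ Finset.range m, u s ≤ N * (N + 1) / 2 := by
    have h1 : ∑ s ∈ Finset.range m, u s ≤ ∑ s ∈ Finset.range m, g s :=
      Finset.sum_le_sum fun s _ => husub s
    have h2 : ∑ s ∈ Finset.range m, g s = ∑ k ∈ (Finset.range m).image g, k := by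
      rw [Finset.sum_image (fun x hx y hy hxy =>
        hginj (Finset.mem_coe.mpr hx) (Finset.mem_coe.mpr hy) hxy)]
    have h3 : (Finset.range m).image g ⊆ Finset.range (N + 1) := by
      intro k hk
      simp only [Finset.mem_image] at hk
      obtain ⟨s, _, rfl⟩ := hk
      simp only [Finset.mem_range]
      exact Nat.lt_succ_of_le (hFnN _)
    have h4 : ∑ k ∈ (Finset.range m).image g, k ≤ ∑ k ∈ Finset.range (N + 1), k :=
      Finset.sum_le_sum_of_subset h3
    have h5 : ∑ k ∈ Finset.range (N + 1), k = N * (N + 1) / 2 := by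
      rw [Finset.sum_range_id]
      simp [Nat.mul_comm]
    omega
  -- probability bound by induction
  have hkeep : ∀ t i, ¬ CFLUnsat C (h t) i → h (t+1) i = h t i :=
    fun t i hi => CFLseq_sat C a x0 t i hi
  have hcard : ∀ t, Nat.card {i : V // CFLUnsat C (h t) i} = u t := by
    intro t
    rw [hu]
    exact Nat.card_coe_set_eq _
  have hprob : ∀ t, γ ^ (∑ s ∈ Finset.range t, u s) * (μ {ω | X 0 ω = x0}).toReal
      ≤ (μ {ω | ∀ s ≤ t, X s ω = h s}).toReal := by
    intro t
    induction t with
    | zero =>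
      have : {ω | X 0 ω = x0} = {ω | ∀ s ≤ 0, X s ω = h s} := by
        ext ω
        simp only [Set.mem_setOf_eq]
        constructor
        · intro hω s hs
          rw [Nat.le_zero.mp hs, h0]; exact hω
        · intro hω
          rw [← h0]; exact hω 0 le_rfl
      rw [Finset.range_zero, Finset.sum_empty, pow_zero, one_mul, this]
    | succ t ih =>
      have hst := hstep t h (hkeep t)
      rw [hcard t] at hst
      calc γ ^ (∑ s ∈ Finset.range (t+1), u s) * (μ {ω | X 0 ω = x0}).toReal
          = γ ^ (u t) * (γ ^ (∑ s ∈ Finset.range t, u s) * (μ {ω | X 0 ω = x0}).toReal) := by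
            rw [Finset.sum_range_succ, pow_add]; ring
        _ ≤ γ ^ (u t) * (μ {ω | ∀ s ≤ t, X s ω = h s}).toReal := by
            apply mul_le_mul_of_nonneg_left ih (pow_nonneg hγ.1.le _)
        _ ≤ (μ {ω | ∀ s ≤ t + 1, X s ω = h s}).toReal := hst
  -- assemble
  refine ⟨m, hmN, h m, ?_, ?_, ?_⟩
  · constructor
    · rw [← h0]; exact CFLseq_mono' C a x0 (Nat.zero_le m)
    · intro hsub
      rw [Set.not_subset] at hUF
      obtain ⟨i, hiU, hiF⟩ := hUF
      have hiU' : CFLUnsat C (h 0) i := by rwa [h0]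
      have h1 : h 1 i = a i := CFLseq_unsat C a x0 0 i hiU'
      have h2 : i ∈ {i : V | h m i = a i} := CFLseq_mono' C a x0 hm1 h1
      have h3 : i ∈ {i : V | x0 i = a i} := hsub h2
      exact hiF h3
  · exact hPm
  · have hmono : μ {ω | ∀ s ≤ m, X s ω = h s} ≤ μ ({ω | X m ω = h m} ∩ {ω | X 0 ω = x0}) := by
      apply measure_mono
      intro ω hω
      exact ⟨hω m le_rfl, by rw [← h0]; exact hω 0 (Nat.zero_le m)⟩
    have hmono' : (μ {ω | ∀ s ≤ m, X s ω = h s}).toReal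
        ≤ (μ ({ω | X m ω = h m} ∩ {ω | X 0 ω = x0})).toReal :=
      ENNReal.toReal_mono (measure_ne_top μ _) hmono
    have hexp : γ ^ (N * (N + 1) / 2) ≤ γ ^ (∑ s ∈ Finset.range m, u s) :=
      pow_le_pow_of_le_one hγ.1.le hγ.2 hsum
    calc γ ^ (N * (N + 1) / 2) * (μ {ω | X 0 ω = x0}).toReal
        ≤ γ ^ (∑ s ∈ Finset.range m, u s) * (μ {ω | X 0 ω = x0}).toReal :=
          mul_le_mul_of_nonneg_right hexp ENNReal.toReal_nonneg
      _ ≤ (μ {ω | ∀ s ≤ m, X s ω = h s}).toReal := hprob m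
      _ ≤ _ := hmono'
end

section
/- In the full-sensing case C = M, under the Markov dynamics where unsatisfied vertices resample each color with probability ≥ γ and satisfied vertices are frozen, starting from any assignment, the event that at each step all unsatisfied vertices switch to their target colors (under a fixed proper coloring a) terminates in at most N steps with all vertices satisfied, and has probability at least γ^{N(N+1)/2}. -/
/-!
Follow the single trajectory of the chain in which every unsatisfied vertex switches to its target
colour `a i`. A vertex that is unsatisfied after a step was off target before it: if it was on
target, its clashing neighbour did not move (the target colouring is proper), so by symmetry that
neighbour was already unsatisfied and would have moved. Hence the set of off-target vertices
shrinks strictly while some vertex is unsatisfied, and since the first step already puts two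
clashing vertices on target, every vertex is satisfied after `N - 1` steps. A vertex unsatisfied
at time `s` is on target from time `s + 1` on, so it is unsatisfied at no time `≥ s + 2`; it is
therefore resampled at most `min 2 (N - 1)` times, at most `N (N + 1) / 2` resamplings in total,
and each resampling costs a factor `γ` in probability.
-/

open MeasureTheory

theorem pow_sum_mul_le_of_pow_mul_le_succ {R : Type*} [CommSemiring R] [PartialOrder R]
    [IsOrderedRing R] {γ : R} (hγ : 0 ≤ γ) {c : ℕ → ℕ} {p : ℕ → R}
    (h : ∀ t, γ ^ c t * p t ≤ p (t + 1)) (t : ℕ) :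
    γ ^ (∑ s ∈ Finset.range t, c s) * p 0 ≤ p t := by
  induction t with
  | zero => simp
  | succ t ih =>
    calc γ ^ (∑ s ∈ Finset.range (t + 1), c s) * p 0
        = γ ^ c t * (γ ^ (∑ s ∈ Finset.range t, c s) * p 0) := by
          rw [Finset.sum_range_succ, pow_add]; ring
      _ ≤ γ ^ c t * p t := mul_le_mul_of_nonneg_left ih (pow_nonneg hγ _)
      _ ≤ p (t + 1) := h t

theorem Nat.mul_min_two_pred_le (N : ℕ) : N * min 2 (N - 1) ≤ N * (N + 1) / 2 := by
  rcases le_or_gt N 3 with hN | hN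
  · interval_cases N <;> simp
  · rw [min_eq_left (by omega), Nat.le_div_iff_mul_le two_pos]
    nlinarith

namespace CFL

open Finset
open scoped Classical

variable {V D : Type*} {M : Set (V × V)} {a x : V → D} {i : V}

noncomputable def targetStep (M : Set (V × V)) (a x : V → D) : V → D :=
  fun i => if CFLUnsat M x i then a i else x i

theorem targetStep_of_unsat (h : CFLUnsat M x i) : targetStep M a x i = a i := if_pos h

theorem targetStep_of_not_unsat (h : ¬ CFLUnsat M x i) : targetStep M a x i = x i := if_neg h

variable [Fintype V]
  (hsym : ∀ i j, (i, j) ∈ M → (j, i) ∈ M) (hirr : ∀ i, (i, i) ∉ M)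
  (hproper : ∀ i j, (i, j) ∈ M → a i ≠ a j)

noncomputable def unsatSet (M : Set (V × V)) (x : V → D) : Finset V := {i | CFLUnsat M x i}

noncomputable def offTargetSet (a x : V → D) : Finset V := {i | x i ≠ a i}

@[simp]
theorem mem_unsatSet : i ∈ unsatSet M x ↔ CFLUnsat M x i := by simp [unsatSet]

@[simp]
theorem mem_offTargetSet : i ∈ offTargetSet a x ↔ x i ≠ a i := by simp [offTargetSet]

theorem natCard_unsat_eq_card_unsatSet : Nat.card {i // CFLUnsat M x i} = #(unsatSet M x) := by
  rw [Nat.card_eq_fintype_card, Fintype.card_subtype]; rfl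

theorem targetStep_eq_self_of_unsatSet_eq_empty (h : unsatSet M x = ∅) :
    targetStep M a x = x :=
  funext fun i ↦ targetStep_of_not_unsat fun hi ↦ by simpa [h] using mem_unsatSet.mpr hi

theorem offTargetSet_targetStep_subset : offTargetSet a (targetStep M a x) ⊆ offTargetSet a x := by
  intro i hi
  by_cases h : CFLUnsat M x i
  · simp [targetStep_of_unsat h] at hi
  · simpa [targetStep_of_not_unsat h] using hi

theorem disjoint_unsatSet_offTargetSet_targetStep :
    Disjoint (unsatSet M x) (offTargetSet a (targetStep M a x)) :=
  disjoint_left.mpr fun _ hi ↦ by simp [targetStep_of_unsat (mem_unsatSet.mp hi)]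

include hsym hirr in
theorem two_le_card_unsatSet (h : (unsatSet M x).Nonempty) : 2 ≤ #(unsatSet M x) := by
  obtain ⟨i, hi⟩ := h
  obtain ⟨j, hji, hx⟩ := mem_unsatSet.mp hi
  have hj : j ∈ unsatSet M x := mem_unsatSet.mpr ⟨i, hsym j i hji, hx.symm⟩
  exact one_lt_card.mpr ⟨i, hi, j, hj, fun h ↦ hirr i (h ▸ hji)⟩

include hsym hproper in
theorem unsatSet_targetStep_subset_offTargetSet :
    unsatSet M (targetStep M a x) ⊆ offTargetSet a x := by
  intro i hi
  obtain ⟨j, hji, hx⟩ := mem_unsatSet.mp hi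
  rw [mem_offTargetSet]
  intro hxi
  have hyi : targetStep M a x i = a i := by
    by_cases h : CFLUnsat M x i
    · exact targetStep_of_unsat h
    · rw [targetStep_of_not_unsat h, hxi]
  by_cases hj : CFLUnsat M x j
  · exact hproper j i hji (by rw [← targetStep_of_unsat (a := a) hj, hx, hyi])
  · have hxj : x j = x i := by rw [← targetStep_of_not_unsat hj, hx, hyi, hxi]
    exact hj ⟨i, hsym j i hji, hxj.symm⟩

include hsym hproper in
theorem unsatSet_inter_offTargetSet_nonempty (h : (unsatSet M x).Nonempty) :
    (unsatSet M x ∩ offTargetSet a x).Nonempty := by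
  obtain ⟨i, hi⟩ := h
  by_cases hxi : x i = a i
  · obtain ⟨j, hji, hx⟩ := mem_unsatSet.mp hi
    refine ⟨j, mem_inter.mpr ⟨mem_unsatSet.mpr ⟨i, hsym j i hji, hx.symm⟩, ?_⟩⟩
    rw [mem_offTargetSet, hx, hxi]
    exact (hproper j i hji).symm
  · exact ⟨i, mem_inter.mpr ⟨hi, mem_offTargetSet.mpr hxi⟩⟩

include hsym hproper in
theorem card_offTargetSet_targetStep_lt (h : (unsatSet M x).Nonempty) :
    #(offTargetSet a (targetStep M a x)) < #(offTargetSet a x) := by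
  obtain ⟨i, hi⟩ := unsatSet_inter_offTargetSet_nonempty hsym hproper h
  rw [mem_inter] at hi
  refine card_lt_card ((ssubset_iff_of_subset offTargetSet_targetStep_subset).mpr ⟨i, hi.2, ?_⟩)
  exact disjoint_left.mp disjoint_unsatSet_offTargetSet_targetStep hi.1

section Trajectory

variable {x₀ : V → D}

local notation "x_[" t "]" => (targetStep M a)^[t] x₀

theorem unsatSet_iterate_nonempty_of_le {s t : ℕ} (hst : s ≤ t)
    (h : (unsatSet M x_[t]).Nonempty) : (unsatSet M x_[s]).Nonempty := by
  rw [nonempty_iff_ne_empty] at h ⊢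
  intro hs
  obtain ⟨k, rfl⟩ := Nat.exists_eq_add_of_le hst
  rw [add_comm, Function.iterate_add_apply,
    Function.iterate_fixed (targetStep_eq_self_of_unsatSet_eq_empty hs)] at h
  exact h hs

theorem offTargetSet_iterate_antitone : Antitone fun t ↦ offTargetSet a x_[t] :=
  antitone_nat_of_succ_le fun t ↦ by
    simpa only [Function.iterate_succ_apply'] using offTargetSet_targetStep_subset

include hsym hproper in
theorem notMem_unsatSet_iterate_of_add_two_le {s t : ℕ} (hst : s + 2 ≤ t)
    (hs : i ∈ unsatSet M x_[s]) : i ∉ unsatSet M x_[t] := by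
  obtain ⟨k, rfl⟩ : ∃ k, t = k + 1 := ⟨t - 1, by omega⟩
  intro ht
  rw [Function.iterate_succ_apply'] at ht
  have hk : i ∈ offTargetSet a x_[s + 1] :=
    offTargetSet_iterate_antitone (show s + 1 ≤ k by omega)
      (unsatSet_targetStep_subset_offTargetSet hsym hproper ht)
  rw [Function.iterate_succ_apply'] at hk
  exact disjoint_left.mp disjoint_unsatSet_offTargetSet_targetStep hs hk

include hsym hirr hproper in
theorem card_offTargetSet_iterate_succ_add_le {t : ℕ} (h : (unsatSet M x_[t]).Nonempty) :
    #(offTargetSet a x_[t + 1]) + t + 2 ≤ Fintype.card V := by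
  induction t with
  | zero =>
    rw [Function.iterate_zero_apply] at h
    rw [zero_add, Function.iterate_one]
    have hdisj := disjoint_unsatSet_offTargetSet_targetStep (M := M) (a := a) (x := x₀)
    have := card_union_of_disjoint hdisj ▸ card_le_univ (unsatSet M x₀ ∪ _)
    have := two_le_card_unsatSet hsym hirr h
    omega
  | succ t ih =>
    have hprev := ih (unsatSet_iterate_nonempty_of_le t.le_succ h)
    have hlt := card_offTargetSet_targetStep_lt hsym hproper h
    rw [Function.iterate_succ_apply']
    omega

include hsym hirr hproper in
theorem unsatSet_iterate_card_pred_eq_empty : unsatSet M x_[Fintype.card V - 1] = ∅ := by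
  by_contra h
  have := card_offTargetSet_iterate_succ_add_le hsym hirr hproper (nonempty_iff_ne_empty.mpr h)
  omega

include hsym hproper in
theorem card_filter_mem_unsatSet_iterate_le_two (T : ℕ) :
    #{s ∈ range T | i ∈ unsatSet M x_[s]} ≤ 2 := by
  set S := {s ∈ range T | i ∈ unsatSet M x_[s]}
  rcases S.eq_empty_or_nonempty with hS | hS
  · simp [hS]
  set m := S.min' hS
  have hm : i ∈ unsatSet M x_[m] := (mem_filter.mp (S.min'_mem hS)).2
  have hsub : S ⊆ Icc m (m + 1) := fun s hs ↦ mem_Icc.mpr ⟨S.min'_le s hs, by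
    by_contra!
    exact notMem_unsatSet_iterate_of_add_two_le hsym hproper (by omega) hm (mem_filter.mp hs).2⟩
  simpa [Nat.card_Icc, add_assoc] using card_le_card hsub

include hsym hproper in
theorem sum_card_unsatSet_iterate_le :
    ∑ s ∈ range (Fintype.card V - 1), #(unsatSet M x_[s])
      ≤ Fintype.card V * (Fintype.card V + 1) / 2 := by
  set N := Fintype.card V
  have hcount : ∀ i : V, #{s ∈ range (N - 1) | i ∈ unsatSet M x_[s]} ≤ min 2 (N - 1) :=
    fun i ↦ le_min (card_filter_mem_unsatSet_iterate_le_two hsym hproper _)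
      ((card_filter_le _ _).trans (card_range _).le)
  calc ∑ s ∈ range (N - 1), #(unsatSet M x_[s])
      = ∑ i, #{s ∈ range (N - 1) | i ∈ unsatSet M x_[s]} := by
        simpa only [bipartiteAbove, bipartiteBelow, filter_mem_eq_inter, univ_inter] using
          sum_card_bipartiteAbove_eq_sum_card_bipartiteBelow (fun s i ↦ i ∈ unsatSet M x_[s])
            (s := range (N - 1)) (t := univ)
    _ ≤ N * min 2 (N - 1) := by simpa using sum_le_card_nsmul univ _ _ fun i _ ↦ hcount i
    _ ≤ N * (N + 1) / 2 := Nat.mul_min_two_pred_le N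

end Trajectory

end CFL

open Finset CFL in
theorem full_sensing_convergence_prob_general {V D : Type*} [Fintype V]
    (M : Set (V × V))
    (hsym : ∀ i j : V, (i, j) ∈ M → (j, i) ∈ M)
    (hirr : ∀ i : V, (i, i) ∉ M)
    {Ω : Type*} [MeasurableSpace Ω]
    (μ : Measure Ω) [IsProbabilityMeasure μ]
    (X : ℕ → Ω → V → D) (γ : ℝ) (hγ : γ ∈ Set.Ioc (0 : ℝ) 1)
    (hstep : ∀ (t : ℕ) (h : ℕ → V → D),
      (∀ i : V, ¬ CFLUnsat M (h t) i → h (t + 1) i = h t i) →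
      γ ^ (Nat.card {i : V // CFLUnsat M (h t) i}) * (μ {ω | ∀ s ≤ t, X s ω = h s}).toReal
        ≤ (μ {ω | ∀ s ≤ t + 1, X s ω = h s}).toReal)
    (a : V → D) (hproper : ∀ i j : V, (i, j) ∈ M → a i ≠ a j)
    (x0 : V → D) :
    ∃ t ≤ Fintype.card V, ∃ y : V → D,
      (∀ i : V, ¬ CFLUnsat M y i) ∧
      γ ^ (Fintype.card V * (Fintype.card V + 1) / 2) * (μ {ω | X 0 ω = x0}).toReal
        ≤ (μ ({ω | X t ω = y} ∩ {ω | X 0 ω = x0})).toReal := by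
  set T := Fintype.card V - 1
  set x : ℕ → V → D := fun t ↦ (targetStep M a)^[t] x0
  have hempty : unsatSet M (x T) = ∅ := unsatSet_iterate_card_pred_eq_empty hsym hirr hproper
  have hsat : ∀ i, ¬ CFLUnsat M (x T) i := fun i hi ↦
    eq_empty_iff_forall_notMem.mp hempty i (mem_unsatSet.mpr hi)
  have hpath := pow_sum_mul_le_of_pow_mul_le_succ hγ.1.le (fun t ↦ by
    have hfrozen : ∀ i, ¬ CFLUnsat M (x t) i → x (t + 1) i = x t i := fun i hi ↦ by
      simp only [x, Function.iterate_succ_apply', targetStep_of_not_unsat hi]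
    simpa only [natCard_unsat_eq_card_unsatSet] using hstep t x hfrozen) T
  have hstart : {ω | ∀ s ≤ 0, X s ω = x s} = {ω | X 0 ω = x0} := by simp [x]
  refine ⟨T, Nat.sub_le _ _, x T, hsat, ?_⟩
  calc γ ^ (Fintype.card V * (Fintype.card V + 1) / 2) * (μ {ω | X 0 ω = x0}).toReal
      ≤ γ ^ (∑ s ∈ Finset.range T, #(unsatSet M (x s))) * (μ {ω | X 0 ω = x0}).toReal :=
        mul_le_mul_of_nonneg_right (pow_le_pow_of_le_one hγ.1.le hγ.2
          (sum_card_unsatSet_iterate_le hsym hproper)) ENNReal.toReal_nonneg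
    _ ≤ (μ {ω | ∀ s ≤ T, X s ω = x s}).toReal := hstart ▸ hpath
    _ ≤ (μ ({ω | X T ω = x T} ∩ {ω | X 0 ω = x0})).toReal :=
        ENNReal.toReal_mono (measure_ne_top μ _)
          (measure_mono fun ω hω ↦ ⟨hω T le_rfl, hω 0 (Nat.zero_le T)⟩)

/-- full sensing `C = M`: Under CFL dynamics, starting from any
assignment, with probability at least `γ^(N(N+1)/2)`, within at most `N` steps the
chain reaches an assignment with no unsatisfied vertex. -/
theorem full_sensing_convergence_prob {V D : Type*} [Fintype V] [Fintype D]
    (M : Set (V × V))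
    (hsym : ∀ i j : V, (i, j) ∈ M → (j, i) ∈ M)
    (hirr : ∀ i : V, (i, i) ∉ M)
    {Ω : Type*} [MeasurableSpace Ω]
    (μ : Measure Ω) [IsProbabilityMeasure μ]
    (X : ℕ → Ω → V → D) (γ : ℝ) (hγ : γ ∈ Set.Ioc (0 : ℝ) 1)
    (hstep : ∀ (t : ℕ) (h : ℕ → V → D),
      (∀ i : V, ¬ CFLUnsat M (h t) i → h (t + 1) i = h t i) →
      γ ^ (Nat.card {i : V // CFLUnsat M (h t) i}) * (μ {ω | ∀ s ≤ t, X s ω = h s}).toReal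
        ≤ (μ {ω | ∀ s ≤ t + 1, X s ω = h s}).toReal)
    (a : V → D) (hproper : ∀ i j : V, (i, j) ∈ M → a i ≠ a j)
    (x0 : V → D) :
    ∃ t ≤ Fintype.card V, ∃ y : V → D,
      (∀ i : V, ¬ CFLUnsat M y i) ∧
      γ ^ (Fintype.card V * (Fintype.card V + 1) / 2) * (μ {ω | X 0 ω = x0}).toReal
        ≤ (μ ({ω | X t ω = y} ∩ {ω | X 0 ω = x0})).toReal :=
  full_sensing_convergence_prob_general M hsym hirr μ X γ hγ hstep a hproper x0
end
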